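/- Let f : U → V be a map in the set-up such that each connected component of V contains at most one critical point of f, and assume (∗∗). Let [c1] and [c2] be two distinct equivalence classes, and for i = 1, 2 let W_i be a nice set consisting of finitely many puzzle pieces such that each piece of W_i contains a point of [c_i]. If [c1] does not accumulate to [c2] and [c2] does not accumulate to [c1], then W_1 ∪ W_2 is nice. -/
import Mathlib


open Set Function Topology

noncomputable section

/-- A (bounded) Jordan domain in the plane: a bounded connected open set whose
frontier is a Jordan curve, i.e. an injective continuous image of the circle. -/
def IsJordanDomain (Ω : Set ℂ) : Prop :=
  IsOpen Ω ∧ IsConnected Ω ∧ Bornology.IsBounded Ω ∧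
  ∃ g : Metric.sphere (0:ℂ) 1 → ℂ, Continuous g ∧ Function.Injective g ∧
    Set.range g = frontier Ω

/-- `A` is strictly contained in `X`: it is a proper subset of some connected
component of `X`. -/
def StrictlyContainedIn (A X : Set ℂ) : Prop :=
  ∃ x ∈ X, A ⊂ connectedComponentIn X x

/-- The set-up: `V ⊆ ℂ` is open with finitely many components, each a bounded Jordan
domain, with pairwise disjoint closures; `U` is open with closure contained in `V`,
with finitely many components with pairwise disjoint closures; `f : U → V` is proper
holomorphic; every critical point of `f` lies in `K_f`. -/
structure Setup where
  U : Set ℂ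
  V : Set ℂ
  f : ℂ → ℂ
  hV_open : IsOpen V
  hV_comp_finite : {C : Set ℂ | ∃ x ∈ V, C = connectedComponentIn V x}.Finite
  hV_jordan : ∀ x ∈ V, IsJordanDomain (connectedComponentIn V x)
  hV_disj : ∀ x ∈ V, ∀ y ∈ V, connectedComponentIn V x ≠ connectedComponentIn V y →
    closure (connectedComponentIn V x) ∩ closure (connectedComponentIn V y) = ∅
  hU_open : IsOpen U
  hUV : closure U ⊆ V
  hU_comp_finite : {C : Set ℂ | ∃ x ∈ U, C = connectedComponentIn U x}.Finite
  hU_disj : ∀ x ∈ U, ∀ y ∈ U, connectedComponentIn U x ≠ connectedComponentIn U y →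
    closure (connectedComponentIn U x) ∩ closure (connectedComponentIn U y) = ∅
  hf_maps : Set.MapsTo f U V
  hf_holo : DifferentiableOn ℂ f U
  hf_proper : ∀ K ⊆ V, IsCompact K → IsCompact (U ∩ f ⁻¹' K)
  hf_crit : ∀ z ∈ U, deriv f z = 0 → ∀ n : ℕ, f^[n] z ∈ U

namespace Setup

variable (S : Setup)

/-- `K_f = {z ∈ U : f^n(z) ∈ U for all n}`. -/
def K : Set ℂ := {z | z ∈ S.U ∧ ∀ n : ℕ, S.f^[n] z ∈ S.U}

/-- The set of critical points of `f`. -/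
def Crit : Set ℂ := {z | z ∈ S.U ∧ deriv S.f z = 0}

/-- `preV n = f^{-n}(V)`, preimages being taken for the partial map `f : U → V`. -/
def preV : ℕ → Set ℂ
  | 0 => S.V
  | n+1 => S.U ∩ S.f ⁻¹' (preV n)

/-- `P` is a puzzle piece of depth `n`: a connected component of `f^{-n}(V)`. -/
def IsPieceOfDepth (n : ℕ) (P : Set ℂ) : Prop :=
  ∃ x ∈ S.preV n, P = connectedComponentIn (S.preV n) x

/-- `P` is a puzzle piece. -/
def IsPiece (P : Set ℂ) : Prop := ∃ n, S.IsPieceOfDepth n P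

/-- `piece n x = P_n(x)`, the puzzle piece of depth `n` containing `x`. -/
def piece (n : ℕ) (x : ℂ) : Set ℂ := connectedComponentIn (S.preV n) x

/-- `X` is a finite union of puzzle pieces. -/
def IsPieceUnion (X : Set ℂ) : Prop :=
  ∃ P : Set (Set ℂ), P.Finite ∧ (∀ Q ∈ P, S.IsPiece Q) ∧ X = ⋃₀ P

/-- `X` is nice: for every connected component `P` of `X` and every `n ≥ 1`,
`f^n(P)` is not strictly contained in `X`. -/
def Nice (X : Set ℂ) : Prop :=
  ∀ x ∈ X, ∀ n : ℕ, 1 ≤ n →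
    ¬ StrictlyContainedIn (S.f^[n] '' connectedComponentIn X x) X

/-- `preIm X n = f^{-n}(X)`, preimages being taken for the partial map `f : U → V`. -/
def preIm (X : Set ℂ) : ℕ → Set ℂ
  | 0 => X
  | n+1 => S.U ∩ S.f ⁻¹' (preIm X n)

/-- `D(X) = ⋃_{k ≥ 0} f^{-k}(X)`. -/
def D (X : Set ℂ) : Set ℂ := ⋃ k, S.preIm X k

/-- For `z ∈ D(X) ∖ X`, `k` is the landing time `k(z)`: the minimal positive
integer with `f^k(z) ∈ X`. -/
def IsLandingTime (X : Set ℂ) (z : ℂ) (k : ℕ) : Prop :=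
  1 ≤ k ∧ S.f^[k] z ∈ X ∧ ∀ j, 1 ≤ j → j < k → S.f^[j] z ∉ X

/-- `landComp X z k = Comp_z(f^{-k}(Comp_{f^k(z)}(X)))`; for `k = k(z)` this is
`L_z(X)`. -/
def landComp (X : Set ℂ) (z : ℂ) (k : ℕ) : Set ℂ :=
  connectedComponentIn (S.preIm (connectedComponentIn X (S.f^[k] z)) k) z

/-- `x` combinatorially accumulates to `y`: for every `n ≥ 0` there is `j ≥ 1`
with `f^j(x) ∈ P_n(y)`. -/
def Acc (x y : ℂ) : Prop := ∀ n : ℕ, ∃ j : ℕ, 1 ≤ j ∧ S.f^[j] x ∈ S.piece n y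

/-- `Forw(x) = {y ∈ K_f : x → y}`. -/
def Forw (x : ℂ) : Set ℂ := {y | y ∈ S.K ∧ S.Acc x y}

/-- The equivalence `c1 ∼ c2` on critical points. -/
def Equiv (c1 c2 : ℂ) : Prop := c1 = c2 ∨ (S.Acc c1 c2 ∧ S.Acc c2 c1)

/-- The class `[c]` of a critical point `c`. -/
def cls (c : ℂ) : Set ℂ := {c' | c' ∈ S.Crit ∧ S.Equiv c c'}

/-- `D(f) = Crit(f)/∼`, the set of equivalence classes. -/
def classes : Set (Set ℂ) := {A | ∃ c ∈ S.Crit, A = S.cls c}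

/-- `[c1] → [c2]`. -/
def ClassAcc (A B : Set ℂ) : Prop := ∃ c1 ∈ A, ∃ c2 ∈ B, S.Acc c1 c2

/-- The partial order on classes: `A ≤ B` iff `A = B` or `B → A`. -/
def ClassLe (A B : Set ℂ) : Prop := A = B ∨ S.ClassAcc B A

/-- The minimal elements of a family of classes w.r.t. `ClassLe`. -/
def minimalsIn (T : Set (Set ℂ)) : Set (Set ℂ) :=
  {A | A ∈ T ∧ ∀ B ∈ T, S.ClassLe B A → B = A}

/-- Auxiliary: `(D_k(f), D_0(f) ∪ ⋯ ∪ D_k(f))`. -/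
def DlevelAux : ℕ → Set (Set ℂ) × Set (Set ℂ)
  | 0 => (S.minimalsIn S.classes, S.minimalsIn S.classes)
  | k+1 =>
      (S.minimalsIn (S.classes \ (DlevelAux k).2),
        (DlevelAux k).2 ∪ S.minimalsIn (S.classes \ (DlevelAux k).2))

/-- `Dlevel k = D_k(f)`. -/
def Dlevel (k : ℕ) : Set (Set ℂ) := (S.DlevelAux k).1

/-- Each connected component of `V` contains at most one critical point. -/
def OneCritPerComp : Prop :=
  ∀ c ∈ S.Crit, ∀ c' ∈ S.Crit,
    connectedComponentIn S.V c = connectedComponentIn S.V c' → c = c'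

/-- Assumption (∗∗): if `c` does not combinatorially accumulate to `c'`, then
`f^j(c) ∉ P_0(c')` for all `j ≥ 1`. -/
def StarStar : Prop :=
  ∀ c ∈ S.Crit, ∀ c' ∈ S.Crit, ¬ S.Acc c c' →
    ∀ j : ℕ, 1 ≤ j → S.f^[j] c ∉ S.piece 0 c'

/-- `K_f(x)`, the connected component of `K_f` containing `x`. -/
def Kcomp (x : ℂ) : Set ℂ := connectedComponentIn S.K x

/-- `P_{n+k}(c1)` is a child of `P_n(c2)`: `f^k(P_{n+k}(c1)) = P_n(c2)` and
`f^{k-1}` maps `P_{n+k-1}(f(c1))` conformally onto `P_n(c2)`. -/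
def IsChild (c1 : ℂ) (k : ℕ) (n : ℕ) (c2 : ℂ) : Prop :=
  1 ≤ k ∧ S.f^[k] '' S.piece (n+k) c1 = S.piece n c2 ∧
  Set.InjOn (S.f^[k-1]) (S.piece (n+k-1) (S.f c1)) ∧
  S.f^[k-1] '' S.piece (n+k-1) (S.f c1) = S.piece n c2

/-- `c` is persistently recurrent: for every `n ≥ 0` and every `c' ∈ [c]`,
`P_n(c')` has only finitely many children. -/
def PersistentlyRecurrent (c : ℂ) : Prop :=
  ∀ n : ℕ, ∀ c' ∈ S.cls c,
    {Q : Set ℂ | ∃ c1 ∈ S.cls c, ∃ k : ℕ, S.IsChild c1 k n c' ∧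
      Q = S.piece (n+k) c1}.Finite

/-- `Crit_n(f)`. -/
def CritN : Set ℂ := {c | c ∈ S.Crit ∧ ∀ c' ∈ S.Crit, ¬ S.Acc c c'}

/-- `Crit_e(f)`. -/
def CritE : Set ℂ := {c | c ∈ S.Crit ∧ ¬ S.Acc c c ∧ ∃ c' ∈ S.Crit, S.Acc c c'}

/-- `Crit_r(f)`. -/
def CritR : Set ℂ := {c | c ∈ S.Crit ∧ S.Acc c c ∧ ¬ S.PersistentlyRecurrent c}

/-- `Crit_p(f)`. -/
def CritP : Set ℂ := {c | c ∈ S.Crit ∧ S.Acc c c ∧ S.PersistentlyRecurrent c}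

end Setup

namespace Setup

variable (S : Setup)

lemma U_subset_V : S.U ⊆ S.V := fun _ hx => S.hUV (subset_closure hx)

lemma preV_succ_subset : ∀ n, S.preV (n + 1) ⊆ S.preV n
  | 0 => fun _ hx => S.U_subset_V hx.1
  | n + 1 => fun _ hx => ⟨hx.1, preV_succ_subset n hx.2⟩

lemma preV_antitone : Antitone S.preV :=
  antitone_nat_of_succ_le S.preV_succ_subset

lemma preV_subset_V (n : ℕ) : S.preV n ⊆ S.V :=
  S.preV_antitone (Nat.zero_le n)

lemma preV_open : ∀ n, IsOpen (S.preV n)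
  | 0 => S.hV_open
  | n + 1 =>
    S.hf_holo.continuousOn.isOpen_inter_preimage S.hU_open (preV_open n)

lemma piece_open {P : Set ℂ} (hP : S.IsPiece P) : IsOpen P := by
  obtain ⟨n, w, _, rfl⟩ := hP
  exact (S.preV_open n).connectedComponentIn

lemma piece_preconnected {P : Set ℂ} (hP : S.IsPiece P) : IsPreconnected P := by
  obtain ⟨n, w, _, rfl⟩ := hP
  exact isPreconnected_connectedComponentIn

/-- A point lying in two classes of non-mutually-accumulating distinct classes
gives a contradiction. -/
lemma class_contra {c1 c2 : ℂ} (hc1 : c1 ∈ S.Crit) (hc2 : c2 ∈ S.Crit)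
    (hne : S.cls c1 ≠ S.cls c2)
    (hacc1 : ¬ S.ClassAcc (S.cls c1) (S.cls c2))
    (hacc2 : ¬ S.ClassAcc (S.cls c2) (S.cls c1))
    {c : ℂ} (hA : c ∈ S.cls c1) (hB : c ∈ S.cls c2) : False := by
  rcases hA.2 with rfl | ⟨ha, _⟩
  · rcases hB.2 with rfl | ⟨ha', hb'⟩
    · exact hne rfl
    · exact hacc2 ⟨c2, ⟨hc2, Or.inl rfl⟩, c1, ⟨hc1, Or.inl rfl⟩, ha'⟩
  · exact hacc1 ⟨c1, ⟨hc1, Or.inl rfl⟩, c, hB, ha⟩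

/-- Pieces whose critical markers lie in distinct, non-mutually-accumulating
classes are disjoint. -/
lemma W_disjoint {c1 c2 : ℂ} (h1 : S.OneCritPerComp)
    (hc1 : c1 ∈ S.Crit) (hc2 : c2 ∈ S.Crit) (hne : S.cls c1 ≠ S.cls c2)
    (hacc1 : ¬ S.ClassAcc (S.cls c1) (S.cls c2))
    (hacc2 : ¬ S.ClassAcc (S.cls c2) (S.cls c1))
    {P1 P2 : Set (Set ℂ)}
    (hP1p : ∀ P ∈ P1, S.IsPiece P) (hP1c : ∀ P ∈ P1, ∃ c ∈ S.cls c1, c ∈ P)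
    (hP2p : ∀ P ∈ P2, S.IsPiece P) (hP2c : ∀ P ∈ P2, ∃ c ∈ S.cls c2, c ∈ P) :
    Disjoint (⋃₀ P1) (⋃₀ P2) := by
  rw [Set.disjoint_left]
  rintro z ⟨Q1, hQ1, hzQ1⟩ ⟨Q2, hQ2, hzQ2⟩
  obtain ⟨c, hcA, hcQ1⟩ := hP1c Q1 hQ1
  obtain ⟨c', hc'B, hc'Q2⟩ := hP2c Q2 hQ2
  obtain ⟨m1, w1, _, rfl⟩ := hP1p Q1 hQ1
  obtain ⟨m2, w2, _, rfl⟩ := hP2p Q2 hQ2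
  rw [connectedComponentIn_eq hzQ1] at hcQ1
  rw [connectedComponentIn_eq hzQ2] at hc'Q2
  have hc_in : c ∈ connectedComponentIn S.V z :=
    connectedComponentIn_mono z (S.preV_subset_V m1) hcQ1
  have hc'_in : c' ∈ connectedComponentIn S.V z :=
    connectedComponentIn_mono z (S.preV_subset_V m2) hc'Q2
  have hcc : connectedComponentIn S.V c = connectedComponentIn S.V c' := by
    rw [← connectedComponentIn_eq hc_in, ← connectedComponentIn_eq hc'_in]
  have : c = c' := h1 c hcA.1 c' hc'B.1 hcc
  exact S.class_contra hc1 hc2 hne hacc1 hacc2 hcA (this ▸ hc'B)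

/-- A forward iterate of a critical point of class `a` cannot land in a union
of pieces each containing a point of class `b`, when `[a]` does not
accumulate to `[b]` (using (∗∗)). -/
lemma cross_contra (h2 : S.StarStar) {a b : ℂ}
    (hacc : ¬ S.ClassAcc (S.cls a) (S.cls b)) {Pb : Set (Set ℂ)}
    (hPbp : ∀ P ∈ Pb, S.IsPiece P) (hPbc : ∀ P ∈ Pb, ∃ c' ∈ S.cls b, c' ∈ P)
    {c : ℂ} (hc : c ∈ S.cls a) {n : ℕ} (hn : 1 ≤ n)
    (hfn : S.f^[n] c ∈ ⋃₀ Pb) : False := by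
  obtain ⟨R, hR, hfR⟩ := hfn
  obtain ⟨c', hc', hc'R⟩ := hPbc R hR
  obtain ⟨m, w, _, rfl⟩ := hPbp R hR
  rw [connectedComponentIn_eq hc'R] at hfR
  have hmem : S.f^[n] c ∈ S.piece 0 c' :=
    connectedComponentIn_mono c' (S.preV_antitone (Nat.zero_le m)) hfR
  exact h2 c hc.1 c' hc'.1 (fun hAcc => hacc ⟨c, hc, c', hc', hAcc⟩) n hn hmem

lemma cc_union_left {A B : Set ℂ} (hA : IsOpen A) (hB : IsOpen B)
    (hd : Disjoint A B) {x : ℂ} (hx : x ∈ A) :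
    connectedComponentIn (A ∪ B) x = connectedComponentIn A x := by
  refine subset_antisymm ?_ (connectedComponentIn_mono x subset_union_left)
  have hpc : IsPreconnected (connectedComponentIn (A ∪ B) x) :=
    isPreconnected_connectedComponentIn
  have hxm : x ∈ connectedComponentIn (A ∪ B) x :=
    mem_connectedComponentIn (Or.inl hx)
  have hsub : connectedComponentIn (A ∪ B) x ⊆ A :=
    hpc.subset_left_of_subset_union hA hB hd
      (connectedComponentIn_subset _ _) ⟨x, hxm, hx⟩
  exact hpc.subset_connectedComponentIn hxm hsub

/-- The main case analysis: `x` in the first union. -/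
lemma main_case (h2 : S.StarStar) {a b : ℂ}
    (hacc : ¬ S.ClassAcc (S.cls a) (S.cls b)) {Pa Pb : Set (Set ℂ)}
    (hPap : ∀ P ∈ Pa, S.IsPiece P) (hPac : ∀ P ∈ Pa, ∃ c ∈ S.cls a, c ∈ P)
    (hWan : S.Nice (⋃₀ Pa))
    (hPbp : ∀ P ∈ Pb, S.IsPiece P) (hPbc : ∀ P ∈ Pb, ∃ c ∈ S.cls b, c ∈ P)
    (hd : Disjoint (⋃₀ Pa) (⋃₀ Pb))
    {x : ℂ} (hx : x ∈ ⋃₀ Pa) {n : ℕ} (hn : 1 ≤ n) {y : ℂ}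
    (hy : y ∈ ⋃₀ Pa ∪ ⋃₀ Pb)
    (hsub : S.f^[n] '' connectedComponentIn (⋃₀ Pa ∪ ⋃₀ Pb) x
      ⊂ connectedComponentIn (⋃₀ Pa ∪ ⋃₀ Pb) y) : False := by
  have hAo : IsOpen (⋃₀ Pa) := isOpen_sUnion fun P hP => S.piece_open (hPap P hP)
  have hBo : IsOpen (⋃₀ Pb) := isOpen_sUnion fun P hP => S.piece_open (hPbp P hP)
  have hccx : connectedComponentIn (⋃₀ Pa ∪ ⋃₀ Pb) x = connectedComponentIn (⋃₀ Pa) x :=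
    cc_union_left hAo hBo hd hx
  rcases hy with hy | hy
  · -- same side: contradicts niceness of `⋃₀ Pa`
    have hccy : connectedComponentIn (⋃₀ Pa ∪ ⋃₀ Pb) y = connectedComponentIn (⋃₀ Pa) y :=
      cc_union_left hAo hBo hd hy
    rw [hccx, hccy] at hsub
    exact hWan x hx n hn ⟨y, hy, hsub⟩
  · -- cross side: a critical point of class `a` lands in `⋃₀ Pb`
    obtain ⟨Q, hQ, hxQ⟩ := hx
    obtain ⟨c, hcA, hcQ⟩ := hPac Q hQ
    have hQsub : Q ⊆ connectedComponentIn (⋃₀ Pa ∪ ⋃₀ Pb) x :=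
      (S.piece_preconnected (hPap Q hQ)).subset_connectedComponentIn hxQ
        (fun z hz => Or.inl ⟨Q, hQ, hz⟩)
    have hfc : S.f^[n] c ∈ connectedComponentIn (⋃₀ Pa ∪ ⋃₀ Pb) y :=
      hsub.1 ⟨c, hQsub hcQ, rfl⟩
    have hccy : connectedComponentIn (⋃₀ Pa ∪ ⋃₀ Pb) y ⊆ ⋃₀ Pb := by
      rw [Set.union_comm, cc_union_left hBo hAo hd.symm hy]
      exact connectedComponentIn_subset _ _
    exact S.cross_contra h2 hacc hPbp hPbc hcA hn (hccy hfc)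

end Setup

/-- If `[c1] ≠ [c2]`, `W_i` is a nice set consisting of finitely
many puzzle pieces each containing a point of `[c_i]`, and neither class
accumulates to the other, then `W_1 ∪ W_2` is nice. -/
theorem stmt_10 (S : Setup) (h1 : S.OneCritPerComp) (h2 : S.StarStar)
    (c1 c2 : ℂ) (hc1 : c1 ∈ S.Crit) (hc2 : c2 ∈ S.Crit)
    (hne : S.cls c1 ≠ S.cls c2)
    (W1 W2 : Set ℂ) (P1 P2 : Set (Set ℂ))
    (hP1fin : P1.Finite) (hP1p : ∀ P ∈ P1, S.IsPiece P)
    (hP1c : ∀ P ∈ P1, ∃ c ∈ S.cls c1, c ∈ P)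
    (hW1 : W1 = ⋃₀ P1) (hW1n : S.Nice W1)
    (hP2fin : P2.Finite) (hP2p : ∀ P ∈ P2, S.IsPiece P)
    (hP2c : ∀ P ∈ P2, ∃ c ∈ S.cls c2, c ∈ P)
    (hW2 : W2 = ⋃₀ P2) (hW2n : S.Nice W2)
    (hacc1 : ¬ S.ClassAcc (S.cls c1) (S.cls c2))
    (hacc2 : ¬ S.ClassAcc (S.cls c2) (S.cls c1)) :
    S.Nice (W1 ∪ W2) := by
  subst hW1 hW2
  have hd : Disjoint (⋃₀ P1) (⋃₀ P2) :=
    S.W_disjoint h1 hc1 hc2 hne hacc1 hacc2 hP1p hP1c hP2p hP2c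
  intro x hx n hn hSC
  obtain ⟨y, hy, hsub⟩ := hSC
  rcases hx with hx | hx
  · exact S.main_case h2 hacc1 hP1p hP1c hW1n hP2p hP2c hd hx hn hy hsub
  · rw [Set.union_comm] at hy hsub
    exact S.main_case h2 hacc2 hP2p hP2c hW2n hP1p hP1c hd.symm hx hn hy hsub
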